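/- arXiv:2106.11285 — 5 statements merged into one kernel-verified Lean document; each statement's English description precedes it below -/
import Mathlib

section
/- Let Q be a symmetric bilinear form with the weak Hodge-Riemann property on a finite-dimensional real vector space V. If β ∈ V satisfies Q(β, β) ≥ 0, then for every α ∈ V one has Q(α, α) · Q(β, β) ≤ Q(α, β)². -/
/-- A symmetric bilinear form `Q` on a finite-dimensional real vector space has the
*weak Hodge-Riemann property* if there exists `v ≠ 0` with `Q v v ≥ 0` and a linear
subspace of codimension at most one on which `Q` is negative semidefinite. -/
def WeakHodgeRiemann {V : Type*} [AddCommGroup V] [Module ℝ V]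
    (Q : V →ₗ[ℝ] V →ₗ[ℝ] ℝ) : Prop :=
  (∃ v : V, v ≠ 0 ∧ 0 ≤ Q v v) ∧
    ∃ W : Submodule ℝ V, Module.finrank ℝ V ≤ Module.finrank ℝ W + 1 ∧
      ∀ w ∈ W, Q w w ≤ 0

/-- Hodge-index inequality: if a symmetric bilinear form `Q` on a
finite-dimensional real vector space has the weak Hodge-Riemann property and
`Q β β ≥ 0`, then for every `α` one has `Q α α * Q β β ≤ (Q α β)²`. -/
theorem hodge_index_of_weakHodgeRiemann
    {V : Type*} [AddCommGroup V] [Module ℝ V] [FiniteDimensional ℝ V]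
    (Q : V →ₗ[ℝ] V →ₗ[ℝ] ℝ) (hsymm : ∀ v v' : V, Q v v' = Q v' v)
    (hQ : WeakHodgeRiemann Q) (β : V) (hβ : 0 ≤ Q β β) :
    ∀ α : V, Q α α * Q β β ≤ (Q α β) ^ 2 := by
  obtain ⟨-, W, hWrank, hWneg⟩ := hQ
  intro α
  rcases eq_or_lt_of_le hβ with h0 | hpos
  · rw [← h0, mul_zero]; exact sq_nonneg _
  have key : ∀ γ : V, Q γ β = 0 → Q γ γ ≤ 0 := by
    intro γ hγβ
    by_contra hγγ
    push_neg at hγγ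
    have hind : LinearIndependent ℝ ![β, γ] := by
      rw [LinearIndependent.pair_iff]
      intro s t hst
      have h1 : Q (s • β + t • γ) β = 0 := by rw [hst]; simp
      have h2 : Q (s • β + t • γ) γ = 0 := by rw [hst]; simp
      simp only [map_add, map_smul, LinearMap.add_apply, LinearMap.smul_apply,
        smul_eq_mul, hγβ, hsymm β γ, hγβ, mul_zero, add_zero, zero_add] at h1 h2
      constructor
      · exact by nlinarith
      · exact by nlinarith
    have hrange : Set.range ![β, γ] = {β, γ} := by
      ext x; simp [Matrix.range_cons, Matrix.range_empty]; tauto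
    set U := Submodule.span ℝ (Set.range ![β, γ]) with hUdef
    have hU : Module.finrank ℝ U = 2 := by
      rw [finrank_span_eq_card hind]; simp
    have hsup : Module.finrank ℝ ↥(U ⊔ W) ≤ Module.finrank ℝ V :=
      Submodule.finrank_le _
    have heq := Submodule.finrank_sup_add_finrank_inf_eq U W
    have hinf : 0 < Module.finrank ℝ ↥(U ⊓ W) := by omega
    have hne : U ⊓ W ≠ ⊥ := by
      intro hb; rw [hb] at hinf; simp at hinf
    obtain ⟨w, hwmem, hw0⟩ := Submodule.exists_mem_ne_zero_of_ne_bot hne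
    obtain ⟨hwU, hwW⟩ := Submodule.mem_inf.mp hwmem
    rw [hUdef, hrange] at hwU
    obtain ⟨a, b, hab⟩ := Submodule.mem_span_pair.mp hwU
    have hww : Q w w ≤ 0 := hWneg w hwW
    have hexp : Q w w = a ^ 2 * Q β β + b ^ 2 * Q γ γ := by
      rw [← hab]
      simp only [map_add, map_smul, LinearMap.add_apply, LinearMap.smul_apply,
        smul_eq_mul, hγβ, hsymm β γ]
      ring
    have ha2 : a ^ 2 ≤ 0 := by
      by_contra h; push_neg at h
      nlinarith [mul_pos h hpos, mul_nonneg (sq_nonneg b) hγγ.le]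
    have ha : a = 0 := pow_eq_zero_iff two_ne_zero |>.mp (le_antisymm ha2 (sq_nonneg a))
    have hb2 : b ^ 2 ≤ 0 := by
      by_contra h; push_neg at h
      nlinarith [mul_pos h hγγ, mul_nonneg (sq_nonneg a) hpos.le]
    have hb : b = 0 := pow_eq_zero_iff two_ne_zero |>.mp (le_antisymm hb2 (sq_nonneg b))
    rw [ha, hb] at hab
    simp at hab
    exact hw0 hab.symm
  have hγβ : Q (Q β β • α - Q α β • β) β = 0 := by
    simp only [map_sub, map_smul, LinearMap.sub_apply, LinearMap.smul_apply, smul_eq_mul,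
      hsymm β α]
    ring
  have := key _ hγβ
  simp only [map_sub, map_smul, LinearMap.sub_apply, LinearMap.smul_apply, smul_eq_mul,
    hsymm β α] at this
  nlinarith
end

section
/- Let e ≥ p ≥ 0 be integers. Then in the polynomial ring ℝ[x₁, …, x_e, t] one has the identity c_p(x₁ + t, …, x_e + t) = Σ_{i=0}^{p} C(e − p + i, i) · c_{p−i}(x₁, …, x_e) · tⁱ, where c_k denotes the k-th elementary symmetric polynomial in e variables and C(·,·) denotes the binomial coefficient. Equivalently, the i-th derived Schur polynomial of the partition λ = (p) in e variables is s_{(p)}^{(i)} = C(e − p + i, i) · c_{p−i}. -/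
/-!
Expanding `∏_{k ∈ S} (x_k + t)` over the subsets `U ⊆ S` gives
`c_p(x + t) = Σ_{|S| = p} Σ_{U ⊆ S} x^U t^{p - |U|}`. Exchanging the sums, a set `U` of size `j`
lies in exactly `C(e - j, p - j)` sets `S` of size `p`, so
`c_p(x + t) = Σ_j C(e - j, p - j) c_j(x) t^{p - j}`; put `j = p - i`.
-/

open MvPolynomial Finset

/-- `c_k` for `k ∈ ℤ`: the `k`-th elementary symmetric polynomial in `e` variables,
with the convention `c_k = 0` for `k < 0` (and automatically `c_k = 0` for `k > e`). -/
noncomputable def esymmZ (e : ℕ) (k : ℤ) : MvPolynomial (Fin e) ℝ :=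
  if k < 0 then 0 else esymm (Fin e) ℝ k.toNat

/-- The Schur polynomial `s_λ = det (c_{λᵢ - i + j})` in `e` variables, for a partition
given as `lam : Fin N → ℕ` (here `i, j` are `0`-based). -/
noncomputable def schur (e N : ℕ) (lam : Fin N → ℕ) : MvPolynomial (Fin e) ℝ :=
  Matrix.det (Matrix.of fun i j : Fin N => esymmZ e ((lam i : ℤ) - (i : ℤ) + (j : ℤ)))

/-- `s_λ(x₁ + t, …, x_e + t)`, as a polynomial in `t` with coefficients in
`ℝ[x₁, …, x_e]`. -/
noncomputable def schurShift (e N : ℕ) (lam : Fin N → ℕ) :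
    Polynomial (MvPolynomial (Fin e) ℝ) :=
  MvPolynomial.aeval (fun k : Fin e => Polynomial.C (MvPolynomial.X k) + Polynomial.X)
    (schur e N lam)

/-- The `i`-th derived Schur polynomial `s_λ^{(i)}` in `e` variables: the coefficient
of `tⁱ` in `s_λ(x₁ + t, …, x_e + t)`. -/
noncomputable def derivedSchur (e N : ℕ) (lam : Fin N → ℕ) (i : ℕ) :
    MvPolynomial (Fin e) ℝ :=
  (schurShift e N lam).coeff i

namespace Finset

variable {α : Type*} [DecidableEq α]

theorem card_filter_powersetCard_superset {u w : Finset α} (huw : u ⊆ w) {p : ℕ}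
    (hup : #u ≤ p) : #{s ∈ powersetCard p w | u ⊆ s} = (#w - #u).choose (p - #u) := by
  rw [← card_sdiff_of_subset huw, ← card_powersetCard]
  refine card_nbij' (· \ u) (· ∪ u) ?_ ?_ ?_ ?_
  · intro s hs
    simp only [coe_filter, Set.mem_ofPred_eq, mem_powersetCard] at hs
    obtain ⟨⟨hsw, rfl⟩, hus⟩ := hs
    simp only [mem_coe, mem_powersetCard]
    exact ⟨sdiff_subset_sdiff hsw le_rfl, card_sdiff_of_subset hus⟩
  · intro v hv
    simp only [mem_coe, mem_powersetCard, subset_sdiff] at hv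
    obtain ⟨⟨hvw, hvu⟩, hv⟩ := hv
    simp only [coe_filter, Set.mem_ofPred_eq, mem_powersetCard]
    refine ⟨⟨union_subset hvw huw, ?_⟩, subset_union_right⟩
    rw [card_union_of_disjoint hvu]
    omega
  · intro s hs
    exact sdiff_union_of_subset (mem_filter.1 hs).2
  · intro v hv
    exact union_sdiff_cancel_right (subset_sdiff.1 (mem_powersetCard.1 hv).1).2

theorem sum_powersetCard_sum_powersetCard {β : Type*} [AddCommMonoid β] (w : Finset α)
    {j p : ℕ} (hjp : j ≤ p) (f : Finset α → β) :
    ∑ s ∈ powersetCard p w, ∑ u ∈ powersetCard j s, f u =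
      (#w - j).choose (p - j) • ∑ u ∈ powersetCard j w, f u := by
  rw [sum_comm' (t' := powersetCard j w) (s' := fun u => {s ∈ powersetCard p w | u ⊆ s}),
    smul_sum]
  · refine sum_congr rfl fun u hu => ?_
    obtain ⟨huw, rfl⟩ := mem_powersetCard.1 hu
    rw [sum_const, card_filter_powersetCard_superset huw hjp]
  · intro s u
    simp only [mem_powersetCard, mem_filter]
    constructor
    · rintro ⟨hs, hus, hu⟩
      exact ⟨⟨hs, hus⟩, hus.trans hs.1, hu⟩
    · rintro ⟨⟨hs, hus⟩, -, hu⟩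
      exact ⟨hs, hus, hu⟩

theorem sum_powersetCard_prod_add_const {R : Type*} [CommSemiring R] (w : Finset α) (p : ℕ)
    (a : α → R) (b : R) :
    ∑ s ∈ powersetCard p w, ∏ k ∈ s, (a k + b) =
      ∑ j ∈ range (p + 1),
        (#w - j).choose (p - j) • (∑ u ∈ powersetCard j w, ∏ k ∈ u, a k) *
          b ^ (p - j) := by
  calc ∑ s ∈ powersetCard p w, ∏ k ∈ s, (a k + b)
      = ∑ s ∈ powersetCard p w, ∑ j ∈ range (p + 1), ∑ u ∈ powersetCard j s,
          (∏ k ∈ u, a k) * b ^ (p - j) := by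
        refine sum_congr rfl fun s hs => ?_
        obtain ⟨-, rfl⟩ := mem_powersetCard.1 hs
        rw [prod_add, sum_powerset]
        refine sum_congr rfl fun j _ => sum_congr rfl fun u hu => ?_
        obtain ⟨hus, rfl⟩ := mem_powersetCard.1 hu
        rw [prod_const, card_sdiff_of_subset hus]
    _ = _ := by
        rw [sum_comm]
        refine sum_congr rfl fun j hj => ?_
        simp only [← sum_mul]
        rw [sum_powersetCard_sum_powersetCard w (mem_range_succ_iff.1 hj), smul_mul_assoc]

end Finset

theorem MvPolynomial.aeval_esymm_add_const {σ R S : Type*} [Fintype σ] [CommSemiring R]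
    [CommSemiring S] [Algebra R S] (a : σ → S) (b : S) (p : ℕ) :
    aeval (fun k => a k + b) (esymm σ R p) =
      ∑ j ∈ range (p + 1),
        (Fintype.card σ - j).choose (p - j) • aeval a (esymm σ R j) * b ^ (p - j) := by
  classical
  simp only [esymm, map_sum, map_prod, aeval_X]
  exact sum_powersetCard_prod_add_const univ p a b

theorem schur_single_row (e p : ℕ) : schur e 1 (fun _ => p) = esymm (Fin e) ℝ p := by
  simp [schur, esymmZ]

theorem aeval_esymm_C_X_add_X (e p : ℕ) (hpe : p ≤ e) :
    aeval (fun k : Fin e => Polynomial.C (X k) + Polynomial.X) (esymm (Fin e) ℝ p) =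
      ∑ i ∈ range (p + 1),
        Polynomial.C ((((e - p + i).choose i : ℕ) : MvPolynomial (Fin e) ℝ) *
          esymm (Fin e) ℝ (p - i)) * Polynomial.X ^ i := by
  have hC (q : MvPolynomial (Fin e) ℝ) :
      aeval (fun k => Polynomial.C (X k)) q = Polynomial.C q := by
    induction q using MvPolynomial.induction_on <;> simp_all
  rw [aeval_esymm_add_const, Fintype.card_fin, ← sum_range_reflect]
  refine sum_congr rfl fun i hi => ?_
  have hip := mem_range_succ_iff.1 hi
  rw [show p + 1 - 1 - i = p - i by omega, show e - (p - i) = e - p + i by omega,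
    Nat.sub_sub_self hip, hC, nsmul_eq_mul, Polynomial.C_mul, map_natCast]

/-- for integers `e ≥ p ≥ 0` one has, in `ℝ[x₁,…,x_e,t]`, the identity
`c_p(x₁+t,…,x_e+t) = Σ_{i=0}^{p} C(e−p+i, i) c_{p−i}(x₁,…,x_e) tⁱ`; equivalently, the
`i`-th derived Schur polynomial of the partition `λ = (p)` in `e` variables is
`s_{(p)}^{(i)} = C(e−p+i, i) · c_{p−i}`. -/
theorem derivedSchur_single_row (e p : ℕ) (hpe : p ≤ e) :
    (MvPolynomial.aeval (fun k : Fin e => Polynomial.C (MvPolynomial.X k) + Polynomial.X)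
        (esymm (Fin e) ℝ p) =
      ∑ i ∈ Finset.range (p + 1),
        Polynomial.C ((((e - p + i).choose i : ℕ) : MvPolynomial (Fin e) ℝ) *
            esymm (Fin e) ℝ (p - i)) * Polynomial.X ^ i) ∧
    ∀ i : ℕ, i ≤ p →
      derivedSchur e 1 (fun _ => p) i =
        (((e - p + i).choose i : ℕ) : MvPolynomial (Fin e) ℝ) * esymm (Fin e) ℝ (p - i) := by
  refine ⟨aeval_esymm_C_X_add_X e p hpe, fun i hi => ?_⟩
  simp only [derivedSchur, schurShift, schur_single_row, aeval_esymm_C_X_add_X e p hpe,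
    Polynomial.finsetSum_coeff, Polynomial.coeff_C_mul_X_pow]
  rw [sum_ite_eq, if_pos (mem_range_succ_iff.2 hi)]
end

section
/- Let λ = (λ₁ ≥ … ≥ λ_N ≥ 0) be a partition and e ≥ λ₁ an integer. Then the top derived Schur polynomial s_λ^{(|λ|)} in e variables is a constant polynomial equal to a strictly positive real number. -/
open MvPolynomial Finset

/-- The derived Schur polynomial with index in `ℤ`, with the convention that it
vanishes for negative indices (it automatically vanishes for indices `> |λ|`). -/
noncomputable def derivedSchurZ (e N : ℕ) (lam : Fin N → ℕ) (i : ℤ) :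
    MvPolynomial (Fin e) ℝ :=
  if i < 0 then 0 else derivedSchur e N lam i.toNat

/-!
Since `s_λ` is homogeneous of degree `|λ|`, the coefficient of `t^|λ|` in `s_λ(x₁ + t, …, x_e + t)`
is the constant `s_λ(1, …, 1) = det (binom(e, λᵢ - i + j))`. Pascal's rule splits each row of
this matrix, so by multilinearity the determinant for `e` is a sum over subsets of rows of
determinants of the same shape for `e - 1` in which the chosen rows have `λᵢ` lowered by one.
The lowered sequences stay weakly decreasing, so every summand is `≥ 0` by induction (a repeated
row gives `0`); lowering exactly the rows with `λᵢ = e` keeps `0 ≤ λᵢ ≤ e - 1`, and this chain of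
summands ends at the identity matrix.
-/

section

variable {σ R : Type*} [CommRing R]

theorem coeff_prod_X_add_C_pow_sum [Nontrivial R] {ι : Type*} (s : Finset ι) (a : ι → R)
    (n : ι → ℕ) :
    (∏ i ∈ s, (Polynomial.X + Polynomial.C (a i)) ^ n i).coeff (∑ i ∈ s, n i) = 1 := by
  have hmonic : ∀ i ∈ s, ((Polynomial.X + Polynomial.C (a i)) ^ n i).Monic :=
    fun i _ => (Polynomial.monic_X_add_C (a i)).pow (n i)
  have hdeg : (∏ i ∈ s, (Polynomial.X + Polynomial.C (a i)) ^ n i).natDegree = ∑ i ∈ s, n i := by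
    simp [Polynomial.natDegree_prod_of_monic _ _ hmonic]
  rw [← hdeg]
  exact (Polynomial.monic_prod_of_monic _ _ hmonic).coeff_natDegree

theorem coeff_aeval_C_X_add_X_of_isHomogeneous [Nontrivial R] {P : MvPolynomial σ R} {d : ℕ}
    (hP : P.IsHomogeneous d) :
    (aeval (fun k => Polynomial.C (X k) + Polynomial.X) P).coeff d
      = C (eval (fun _ => (1 : R)) P) := by
  rw [aeval_def, eval₂_eq, Polynomial.finsetSum_coeff, eval_eq, map_sum]
  refine Finset.sum_congr rfl fun m hm => ?_
  have hdeg : ∑ i ∈ m.support, m i = d := by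
    rw [← hP (mem_support_iff.mp hm), Finsupp.weight_apply]
    simp [Finsupp.sum]
  simp_rw [add_comm (Polynomial.C (X _)) Polynomial.X]
  rw [Polynomial.algebraMap_apply, Polynomial.coeff_C_mul, ← hdeg,
    coeff_prod_X_add_C_pow_sum]
  simp

theorem isHomogeneous_esymm [Fintype σ] (n : ℕ) : (esymm σ R n).IsHomogeneous n := by
  refine IsHomogeneous.sum _ _ _ fun t ht => ?_
  simpa [(mem_powersetCard.mp ht).2] using
    IsHomogeneous.prod t (fun i => (X i : MvPolynomial σ R)) (fun _ => 1)
      fun i _ => isHomogeneous_X R i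

theorem eval_one_esymm [Fintype σ] (n : ℕ) :
    eval (fun _ => (1 : R)) (esymm σ R n) = (Fintype.card σ).choose n := by
  simp [esymm, card_powersetCard]

theorem isHomogeneous_det_of_isHomogeneous_add {n : Type*} [Fintype n] [DecidableEq n]
    (M : Matrix n n (MvPolynomial σ R)) (a b : n → ℤ)
    (hM : ∀ i j, (M i j).IsHomogeneous (a i + b j).toNat)
    (hneg : ∀ i j, a i + b j < 0 → M i j = 0) :
    M.det.IsHomogeneous (∑ i, a i + ∑ j, b j).toNat := by
  rw [Matrix.det_apply']
  refine IsHomogeneous.sum _ _ _ fun τ _ => ?_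
  rw [← map_intCast (C : R →+* MvPolynomial σ R)]
  refine IsHomogeneous.C_mul ?_ _
  by_cases hnonneg : ∀ i, 0 ≤ a (τ i) + b i
  · have hsum : ∑ i, (a (τ i) + b i).toNat = (∑ i, a i + ∑ j, b j).toNat := by
      have hcast : ((∑ i, (a (τ i) + b i).toNat : ℕ) : ℤ) = ∑ i, (a (τ i) + b i) := by
        push_cast
        exact sum_congr rfl fun i _ => Int.toNat_of_nonneg (hnonneg i)
      rw [sum_add_distrib, Equiv.sum_comp τ a] at hcast
      omega
    rw [← hsum]
    exact IsHomogeneous.prod _ _ _ fun i _ => hM _ _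
  · push Not at hnonneg
    obtain ⟨i, hi⟩ := hnonneg
    rw [prod_eq_zero (f := fun i => M (τ i) i) (mem_univ i) (hneg _ _ hi)]
    exact isHomogeneous_zero _ _ _

end

noncomputable def binomZ (m : ℕ) (k : ℤ) : ℝ :=
  if k < 0 then 0 else (m.choose k.toNat : ℝ)

theorem binomZ_succ (m : ℕ) (k : ℤ) : binomZ (m + 1) k = binomZ m k + binomZ m (k - 1) := by
  unfold binomZ
  rcases lt_trichotomy k 0 with hk | rfl | hk
  · simp [hk, show k - 1 < 0 by omega]
  · simp
  · rw [if_neg (by omega), if_neg (by omega), if_neg (by omega),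
      show k.toNat = (k - 1).toNat + 1 by omega, Nat.choose_succ_succ, Nat.cast_add, add_comm]

theorem binomZ_zero (k : ℤ) : binomZ 0 k = if k = 0 then 1 else 0 := by
  unfold binomZ
  split_ifs <;> simp_all [Nat.choose_eq_zero_iff]; omega

section

variable {N : ℕ}

noncomputable def binomMatrix (m : ℕ) (u : Fin N → ℤ) : Matrix (Fin N) (Fin N) ℝ :=
  Matrix.of fun i j => binomZ m (u i + j)

theorem binomMatrix_zero_eq_one {u : Fin N → ℤ} (hu : ∀ i, u i = -i) : binomMatrix 0 u = 1 := by
  ext i j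
  simp only [binomMatrix, Matrix.of_apply, binomZ_zero, hu, Matrix.one_apply, Fin.ext_iff]
  congr 1
  simp only [eq_iff_iff]
  omega

theorem StrictAnti.eq_neg_of_mem_Ioc {u : Fin N → ℤ} (hu : StrictAnti u)
    (hrange : ∀ i, u i ∈ Set.Ioc (-(N : ℤ)) 0) (i : Fin N) : u i = -i := by
  simp only [Set.mem_Ioc] at hrange
  let f : Fin N → Fin N := fun i => ⟨(-u i).toNat, by grind⟩
  have hf : StrictMono f := fun i j hij => by
    have := hu hij; have := hrange i; have := hrange j
    simp only [f, Fin.mk_lt_mk]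
    omega
  have hfi : (-u i).toNat = i := congrArg Fin.val (congrFun hf.eq_id i)
  have := hrange i
  omega

theorem det_binomMatrix_zero_nonneg {u : Fin N → ℤ} (hu : StrictAnti u) :
    0 ≤ (binomMatrix 0 u).det := by
  by_cases hrange : ∀ i, u i ∈ Set.Ioc (-(N : ℤ)) 0
  · rw [binomMatrix_zero_eq_one (hu.eq_neg_of_mem_Ioc hrange), Matrix.det_one]
    exact zero_le_one
  · push Not at hrange
    obtain ⟨i, hi⟩ := hrange
    refine (Matrix.det_eq_zero_of_row_eq_zero i fun j => ?_).ge
    simp only [binomMatrix, Matrix.of_apply, binomZ_zero, Set.mem_Ioc] at hi ⊢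
    have := j.isLt
    rw [if_neg (by omega)]

theorem binomMatrix_piecewise (m : ℕ) (s : Finset (Fin N)) (u v : Fin N → ℤ) :
    binomMatrix m (s.piecewise u v) = s.piecewise (binomMatrix m u) (binomMatrix m v) := by
  ext i j
  by_cases hi : i ∈ s <;> simp [binomMatrix, Finset.piecewise, hi]

theorem det_binomMatrix_succ (m : ℕ) (u : Fin N → ℤ) :
    (binomMatrix (m + 1) u).det =
      ∑ s : Finset (Fin N), (binomMatrix m (s.piecewise u fun i => u i - 1)).det := by
  have hpascal : binomMatrix (m + 1) u = binomMatrix m u + binomMatrix m fun i => u i - 1 := by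
    ext i j
    simp only [binomMatrix, Matrix.of_apply, Matrix.add_apply, binomZ_succ, sub_add_eq_add_sub]
  simp_rw [binomMatrix_piecewise, hpascal]
  exact Matrix.detRowAlternating.map_add_univ _ _

theorem StrictAnti.antitone_piecewise_sub_one {u : Fin N → ℤ} (hu : StrictAnti u)
    (s : Finset (Fin N)) : Antitone (s.piecewise u fun i => u i - 1) := by
  intro i k hik
  rcases hik.eq_or_lt with rfl | hik
  · rfl
  · have := hu hik
    simp only [Finset.piecewise]
    split_ifs <;> omega

theorem Antitone.strictAnti_or_det_binomMatrix_eq_zero {u : Fin N → ℤ} (hu : Antitone u)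
    (m : ℕ) : StrictAnti u ∨ (binomMatrix m u).det = 0 := by
  by_cases hinj : Function.Injective u
  · exact .inl (hu.strictAnti_of_injective hinj)
  · obtain ⟨i, k, hik, hne⟩ := Function.not_injective_iff.mp hinj
    refine .inr (Matrix.det_zero_of_row_eq hne ?_)
    ext j
    simp [binomMatrix, hik]

theorem det_binomMatrix_nonneg (m : ℕ) {u : Fin N → ℤ} (hu : Antitone u) :
    0 ≤ (binomMatrix m u).det := by
  induction m generalizing u with
  | zero =>
    obtain hu | hzero := hu.strictAnti_or_det_binomMatrix_eq_zero 0
    · exact det_binomMatrix_zero_nonneg hu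
    · exact hzero.ge
  | succ m ih =>
    obtain hu | hzero := hu.strictAnti_or_det_binomMatrix_eq_zero (m + 1)
    · rw [det_binomMatrix_succ]
      exact sum_nonneg fun s _ => ih (hu.antitone_piecewise_sub_one s)
    · exact hzero.ge

theorem det_binomMatrix_pos (m : ℕ) {u : Fin N → ℤ} (hu : StrictAnti u)
    (hlow : ∀ i, 0 ≤ u i + i) (hhigh : ∀ i, u i + i ≤ m) : 0 < (binomMatrix m u).det := by
  induction m generalizing u with
  | zero =>
    rw [binomMatrix_zero_eq_one fun i => by have := hlow i; have := hhigh i; omega, Matrix.det_one]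
    exact zero_lt_one
  | succ m ih =>
    rw [det_binomMatrix_succ]
    refine sum_pos' (fun s _ => det_binomMatrix_nonneg m (hu.antitone_piecewise_sub_one s))
      -- lower exactly the rows with `u i + i = m + 1`
      ⟨univ.filter fun i => u i + i ≤ m, mem_univ _, ih ?_ ?_ ?_⟩
    · intro i k hik
      have := hu hik; have := hhigh i; have := hhigh k
      have : (i : ℕ) < k := hik
      simp only [Finset.piecewise, mem_filter, mem_univ, true_and]
      split_ifs <;> omega
    all_goals
      intro i
      have := hlow i; have := hhigh i
      simp only [Finset.piecewise, mem_filter, mem_univ, true_and]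
      split_ifs <;> omega

end

section Schur

variable (e : ℕ)

theorem esymmZ_of_neg {k : ℤ} (hk : k < 0) : esymmZ e k = 0 := if_pos hk

theorem isHomogeneous_esymmZ (k : ℤ) : (esymmZ e k).IsHomogeneous k.toNat := by
  unfold esymmZ
  split
  · exact isHomogeneous_zero _ _ _
  · exact isHomogeneous_esymm _

theorem eval_one_esymmZ (k : ℤ) : eval (fun _ => (1 : ℝ)) (esymmZ e k) = binomZ e k := by
  unfold esymmZ binomZ
  split
  · simp
  · rw [eval_one_esymm, Fintype.card_fin]

variable {N : ℕ} (lam : Fin N → ℕ)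

theorem isHomogeneous_schur : (schur e N lam).IsHomogeneous (∑ j, lam j) := by
  have h := isHomogeneous_det_of_isHomogeneous_add _ (fun i : Fin N => (lam i : ℤ) - i)
    (fun j => (j : ℤ)) (fun i j => isHomogeneous_esymmZ e _) fun i j => esymmZ_of_neg e
  rwa [← sum_add_distrib, Finset.sum_congr rfl fun i _ => sub_add_cancel _ _, ← Nat.cast_sum,
    Int.toNat_natCast] at h

theorem eval_one_schur :
    eval (fun _ => (1 : ℝ)) (schur e N lam) = (binomMatrix e fun i => (lam i : ℤ) - i).det := by
  rw [schur, RingHom.map_det]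
  congr 1
  ext i j
  simp [binomMatrix, eval_one_esymmZ]

end Schur

/-- for a partition `λ = (λ₁ ≥ … ≥ λ_N ≥ 0)` and an integer `e ≥ λ₁`, the
top derived Schur polynomial `s_λ^{(|λ|)}` in `e` variables is a constant polynomial
equal to a strictly positive real number. -/
theorem derivedSchur_top_pos (e N : ℕ) (hN : 0 < N) (lam : Fin N → ℕ)
    (hanti : Antitone lam) (hle : lam ⟨0, hN⟩ ≤ e) :
    ∃ r : ℝ, 0 < r ∧ derivedSchur e N lam (∑ j, lam j) = MvPolynomial.C r := by
  refine ⟨(binomMatrix e fun i => (lam i : ℤ) - i).det, det_binomMatrix_pos e ?_ ?_ ?_, ?_⟩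
  · intro i k hik
    have := hanti hik.le
    have : (i : ℕ) < k := hik
    dsimp only
    omega
  · simp
  · intro i
    have := hanti (show ⟨0, hN⟩ ≤ i from Nat.zero_le _)
    omega
  · rw [derivedSchur, schurShift,
      coeff_aeval_C_X_add_X_of_isHomogeneous (isHomogeneous_schur e lam), eval_one_schur]
end

section
/- Let λ be a partition, e ≥ 1 an integer, 0 ≤ i ≤ |λ|, and let x₁, …, x_e be nonnegative real numbers. Then s_λ^{(i)}(x₁, …, x_e) ≥ 0. -/
open MvPolynomial Finset

/-- Nonnegative coefficients predicate. -/
def NNCoeff {σ : Type*} (p : MvPolynomial σ ℝ) : Prop := ∀ d, 0 ≤ MvPolynomial.coeff d p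

lemma NNCoeff.zero {σ : Type*} : NNCoeff (0 : MvPolynomial σ ℝ) := by
  intro d; simp

lemma NNCoeff.one {σ : Type*} : NNCoeff (1 : MvPolynomial σ ℝ) := by
  classical
  intro d; rw [MvPolynomial.coeff_one]; split <;> norm_num

lemma NNCoeff.add {σ : Type*} {p q : MvPolynomial σ ℝ} (hp : NNCoeff p) (hq : NNCoeff q) :
    NNCoeff (p + q) := by
  intro d; rw [MvPolynomial.coeff_add]; exact add_nonneg (hp d) (hq d)

lemma NNCoeff.mul {σ : Type*} {p q : MvPolynomial σ ℝ} (hp : NNCoeff p) (hq : NNCoeff q) :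
    NNCoeff (p * q) := by
  classical
  intro d; rw [MvPolynomial.coeff_mul]
  exact Finset.sum_nonneg fun z _ => mul_nonneg (hp _) (hq _)

lemma NNCoeff.sum {σ α : Type*} (s : Finset α) (f : α → MvPolynomial σ ℝ)
    (h : ∀ a ∈ s, NNCoeff (f a)) : NNCoeff (∑ a ∈ s, f a) :=
  Finset.sum_induction f NNCoeff (fun _ _ => NNCoeff.add) NNCoeff.zero h

lemma NNCoeff.prod {σ α : Type*} (s : Finset α) (f : α → MvPolynomial σ ℝ)
    (h : ∀ a ∈ s, NNCoeff (f a)) : NNCoeff (∏ a ∈ s, f a) :=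
  Finset.prod_induction f NNCoeff (fun _ _ => NNCoeff.mul) NNCoeff.one h

lemma NNCoeff.X {σ : Type*} (i : σ) : NNCoeff (MvPolynomial.X (R := ℝ) i) := by
  classical
  intro d; rw [MvPolynomial.coeff_X']; split <;> norm_num

lemma NNCoeff.rename {σ τ : Type*} {f : σ → τ} (hf : Function.Injective f)
    {p : MvPolynomial σ ℝ} (hp : NNCoeff p) : NNCoeff (MvPolynomial.rename f p) := by
  classical
  intro d
  by_cases h : ∃ u : σ →₀ ℕ, Finsupp.mapDomain f u = d
  · obtain ⟨u, rfl⟩ := h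
    rw [MvPolynomial.coeff_rename_mapDomain f hf]
    exact hp u
  · rw [MvPolynomial.coeff_rename_eq_zero f p d]
    intro u hu
    exact absurd ⟨u, hu⟩ h

lemma perm_eq_one_of_strictMono {n : ℕ} (σ : Equiv.Perm (Fin n))
    (h : StrictMono (σ : Fin n → Fin n)) : σ = 1 := by
  have hsymm : StrictMono (σ.symm : Fin n → Fin n) := by
    intro a b hab
    rcases lt_trichotomy (σ.symm a) (σ.symm b) with hlt | heq | hgt
    · exact hlt
    · exact absurd (by rw [← σ.apply_symm_apply a, ← σ.apply_symm_apply b, heq]) hab.ne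
    · exact absurd (by
        have := h hgt
        rwa [σ.apply_symm_apply, σ.apply_symm_apply] at this) hab.asymm
  haveI : WellFoundedLT (Fin n) := inferInstance
  ext i
  have h1 : i ≤ σ i := StrictMono.le_apply (f := (σ : Fin n → Fin n)) h
  have h2 : σ i ≤ σ.symm (σ i) := StrictMono.le_apply (f := (σ.symm : Fin n → Fin n)) hsymm
  rw [σ.symm_apply_apply] at h2
  exact le_antisymm h2 h1

lemma det_eq_prod_diag {n : ℕ} {R : Type*} [CommRing R] (g h : Fin n → ℤ)
    (hg : StrictMono g) (hh : StrictMono h) (D : Matrix (Fin n) (Fin n) R)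
    (hD : ∀ k j, D k j ≠ 0 → g k ≤ h j ∧ h j ≤ g k + 1) :
    D.det = ∏ j, D j j := by
  rw [Matrix.det_apply]
  rw [Finset.sum_eq_single_of_mem (1 : Equiv.Perm (Fin n)) (Finset.mem_univ _)]
  · simp
  · intro σ _ hσ
    have hns : ¬ StrictMono (σ : Fin n → Fin n) := fun hs => hσ (perm_eq_one_of_strictMono σ hs)
    have hex : ∃ a b : Fin n, a < b ∧ σ b < σ a := by
      by_contra hc
      push_neg at hc
      exact hns fun a b hab => lt_of_le_of_ne (hc a b hab) (fun he => hab.ne (σ.injective he))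
    obtain ⟨a, b, hab, hba⟩ := hex
    suffices hz : ∃ i0, D (σ i0) i0 = 0 by
      obtain ⟨i0, hi0⟩ := hz
      rw [Finset.prod_eq_zero (f := fun i : Fin n => D (σ i) i) (Finset.mem_univ i0) hi0, smul_zero]
    by_contra hc
    push_neg at hc
    have Ha := hD (σ a) a (hc a)
    have Hb := hD (σ b) b (hc b)
    have h1 : h a < h b := hh hab
    have h2 : g (σ b) < g (σ a) := hg hba
    omega

lemma rename_esymm_eq (e k : ℕ) :
    MvPolynomial.rename Fin.castSucc (esymm (Fin e) ℝ k) =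
      ∑ t ∈ powersetCard k (univ.map Fin.castSuccEmb), ∏ i ∈ t, (X i : MvPolynomial (Fin (e+1)) ℝ) := by
  rw [esymm, map_sum, Finset.powersetCard_map, Finset.sum_map]
  refine Finset.sum_congr rfl fun t _ => ?_
  have hemb : (Finset.mapEmbedding Fin.castSuccEmb).toEmbedding t = t.map Fin.castSuccEmb := rfl
  rw [map_prod, hemb, Finset.prod_map]
  simp only [rename_X]
  rfl

lemma esymm_succ (e k : ℕ) :
    esymm (Fin (e+1)) ℝ (k+1) =
      MvPolynomial.rename Fin.castSucc (esymm (Fin e) ℝ (k+1)) +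
        X (Fin.last e) * MvPolynomial.rename Fin.castSucc (esymm (Fin e) ℝ k) := by
  classical
  have hu : (univ : Finset (Fin (e+1))) = insert (Fin.last e) (univ.map Fin.castSuccEmb) := by
    ext i
    simp only [mem_univ, mem_insert, true_iff]
    rcases Fin.eq_castSucc_or_eq_last i with ⟨j, rfl⟩ | rfl
    · exact Or.inr (Finset.mem_map.2 ⟨j, mem_univ j, rfl⟩)
    · exact Or.inl rfl
  have hnot : Fin.last e ∉ univ.map Fin.castSuccEmb := by
    intro hmem
    obtain ⟨j, -, hj⟩ := Finset.mem_map.1 hmem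
    exact (Fin.castSucc_lt_last j).ne (by simpa using hj)
  have hdis : Disjoint (powersetCard (k+1) (univ.map Fin.castSuccEmb))
      ((powersetCard k (univ.map (Fin.castSuccEmb (n := e)))).image (insert (Fin.last e))) := by
    rw [Finset.disjoint_left]
    intro t ht1 ht2
    obtain ⟨u, hu', rfl⟩ := Finset.mem_image.1 ht2
    have := (Finset.mem_powersetCard.1 ht1).1
    exact hnot (this (Finset.mem_insert_self _ _))
  rw [esymm, hu, Finset.powersetCard_succ_insert hnot, Finset.sum_union hdis]
  have hinj : ∀ t ∈ powersetCard k (univ.map (Fin.castSuccEmb (n := e))),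
      ∀ t' ∈ powersetCard k (univ.map (Fin.castSuccEmb (n := e))),
        insert (Fin.last e) t = insert (Fin.last e) t' → t = t' := by
    intro t ht t' ht' hins
    have h1 : Fin.last e ∉ t := fun hl => hnot ((Finset.mem_powersetCard.1 ht).1 hl)
    have h2 : Fin.last e ∉ t' := fun hl => hnot ((Finset.mem_powersetCard.1 ht').1 hl)
    rw [← Finset.erase_insert h1, ← Finset.erase_insert h2, hins]
  rw [Finset.sum_image hinj, rename_esymm_eq, rename_esymm_eq]
  congr 1
  rw [Finset.mul_sum]
  refine Finset.sum_congr rfl fun t ht => ?_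
  have hl : Fin.last e ∉ t := fun hl => hnot ((Finset.mem_powersetCard.1 ht).1 hl)
  rw [Finset.prod_insert hl]

lemma esymmZ_succ (e : ℕ) (m : ℤ) :
    esymmZ (e+1) m =
      MvPolynomial.rename Fin.castSucc (esymmZ e m) +
        X (Fin.last e) * MvPolynomial.rename Fin.castSucc (esymmZ e (m-1)) := by
  unfold esymmZ
  rcases lt_trichotomy m 0 with h | h | h
  · rw [if_pos h, if_pos h, if_pos (by omega)]
    simp
  · subst h
    rw [if_neg (by omega), if_neg (by omega), if_pos (by omega)]
    simp [esymm_zero]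
  · obtain ⟨a, rfl⟩ : ∃ a : ℕ, m = (a : ℤ) + 1 := ⟨(m-1).toNat, by omega⟩
    rw [if_neg (by omega), if_neg (by omega), if_neg (by omega)]
    have h1 : ((a : ℤ) + 1).toNat = a + 1 := by omega
    have h2 : ((a : ℤ) + 1 - 1).toNat = a := by omega
    rw [h1, h2, esymm_succ]
lemma nn_esymmZ (e : ℕ) (m : ℤ) : NNCoeff (esymmZ e m) := by
  unfold esymmZ
  split
  · exact NNCoeff.zero
  · rw [esymm]
    exact NNCoeff.sum _ _ fun t _ => NNCoeff.prod _ _ fun i _ => NNCoeff.X i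

lemma esymmZ_zero_vars (m : ℤ) (hm : m ≠ 0) : esymmZ 0 m = 0 := by
  unfold esymmZ
  split
  · rfl
  · rw [esymm]
    have h1 : (univ : Finset (Fin 0)) = ∅ := by simp
    rw [h1, Finset.powersetCard_eq_empty.2 (by simpa using by omega : (∅ : Finset (Fin 0)).card < m.toNat)]
    simp

lemma toeplitz_nn : ∀ (e n : ℕ) (g h : Fin n → ℤ), StrictMono g → StrictMono h →
    NNCoeff (Matrix.det (Matrix.of fun k j : Fin n => esymmZ e (h j - g k))) := by
  intro e
  induction e with
  | zero =>
    intro n g h hg hh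
    rw [det_eq_prod_diag g h hg hh _ ?hD]
    case hD =>
      intro k j hne
      simp only [Matrix.of_apply] at hne
      have : h j - g k = 0 := by
        by_contra hc
        exact hne (esymmZ_zero_vars _ hc)
      constructor <;> omega
    exact NNCoeff.prod _ _ fun j _ => nn_esymmZ 0 _
  | succ e IH =>
    intro n g h hg hh
    classical
    let R := MvPolynomial (Fin (e+1)) ℝ
    let a : Fin n → Fin n → R :=
      fun j k => MvPolynomial.rename Fin.castSucc (esymmZ e (h j - g k))
    let b : Fin n → Fin n → R :=
      fun j k => X (Fin.last e) * MvPolynomial.rename Fin.castSucc (esymmZ e (h j - 1 - g k))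
    have hstep : (Matrix.of fun k j : Fin n => esymmZ (e+1) (h j - g k)) =
        Matrix.transpose (Matrix.of fun j k : Fin n => esymmZ (e+1) (h j - g k)) := rfl
    rw [hstep, Matrix.det_transpose]
    have hab : (Matrix.of fun j k : Fin n => esymmZ (e+1) (h j - g k)) = a + b := by
      funext j k
      show esymmZ (e+1) (h j - g k) = a j k + b j k
      rw [esymmZ_succ, show h j - g k - 1 = h j - 1 - g k from by ring]
    have hdet : Matrix.det (Matrix.of fun j k : Fin n => esymmZ (e+1) (h j - g k)) =
        (Matrix.detRowAlternating (R := R) (n := Fin n)).toMultilinearMap (a + b) := by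
      rw [hab]; rfl
    rw [hdet, (Matrix.detRowAlternating (R := R) (n := Fin n)).toMultilinearMap.map_add_univ a b]
    apply NNCoeff.sum
    intro s _
    -- piecewise rows as scalar multiples
    set h' : Fin n → ℤ := fun j => h j - (if j ∈ s then 0 else 1) with hh'
    set c : Fin n → R := fun j => if j ∈ s then (1 : R) else X (Fin.last e) with hc
    set r : Fin n → Fin n → R :=
      fun j k => MvPolynomial.rename Fin.castSucc (esymmZ e (h' j - g k)) with hr
    have hpw : s.piecewise a b = fun j => c j • r j := by
      funext j
      by_cases hj : j ∈ s
      · rw [Finset.piecewise_eq_of_mem _ _ _ hj]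
        funext k
        show a j k = c j • r j k
        simp only [a, c, r, h']
        rw [if_pos hj, if_pos hj, one_smul, show h j - 0 - g k = h j - g k from by ring]
      · rw [Finset.piecewise_eq_of_notMem _ _ _ hj]
        funext k
        show b j k = c j • r j k
        simp only [b, c, r, h']
        rw [if_neg hj, if_neg hj, smul_eq_mul]
    rw [hpw, (Matrix.detRowAlternating (R := R) (n := Fin n)).toMultilinearMap.map_smul_univ c r]
    rw [smul_eq_mul]
    apply NNCoeff.mul
    · apply NNCoeff.prod
      intro j _
      by_cases hj : j ∈ s
      · rw [hc]; simp only [if_pos hj]; exact NNCoeff.one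
      · rw [hc]; simp only [if_neg hj]; exact NNCoeff.X _
    · -- det of r
      have hrdet : (Matrix.detRowAlternating (R := R) (n := Fin n)).toMultilinearMap r =
          Matrix.det ((Matrix.of fun j k : Fin n => esymmZ e (h' j - g k)).map
            (MvPolynomial.rename (R := ℝ) Fin.castSucc)) := rfl
      rw [hrdet]
      by_cases hinj : Function.Injective h'
      · show NNCoeff (((MvPolynomial.rename (R := ℝ) (Fin.castSucc (n := e))).toRingHom.mapMatrix
          (Matrix.of fun j k : Fin n => esymmZ e (h' j - g k))).det)
        rw [← RingHom.map_det]
        apply NNCoeff.rename (Fin.castSucc_injective e)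
        have hmono : Monotone h' := by
          intro j j' hle
          rcases eq_or_lt_of_le hle with rfl | hlt
          · exact le_refl _
          · have := hh hlt
            simp only [h']
            split <;> split <;> omega
        have hsm : StrictMono h' := hmono.strictMono_of_injective hinj
        have htr : (Matrix.of fun j k : Fin n => esymmZ e (h' j - g k)) =
            Matrix.transpose (Matrix.of fun k j : Fin n => esymmZ e (h' j - g k)) := rfl
        rw [htr, Matrix.det_transpose]
        exact IH n g h' hg hsm
      · rw [Function.not_injective_iff] at hinj
        obtain ⟨j, j', hjj, hne⟩ := hinj
        rw [Matrix.det_zero_of_row_eq hne (by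
          funext k
          simp only [Matrix.map_apply, Matrix.of_apply, hjj])]
        exact NNCoeff.zero

def PNCoeff (q : Polynomial ℝ) : Prop := ∀ n, 0 ≤ q.coeff n

lemma PNCoeff.zero : PNCoeff 0 := by intro n; simp
lemma PNCoeff.one : PNCoeff 1 := by
  intro n; rw [Polynomial.coeff_one]; split <;> norm_num
lemma PNCoeff.add {p q : Polynomial ℝ} (hp : PNCoeff p) (hq : PNCoeff q) : PNCoeff (p + q) := by
  intro n; rw [Polynomial.coeff_add]; exact add_nonneg (hp n) (hq n)
lemma PNCoeff.mul {p q : Polynomial ℝ} (hp : PNCoeff p) (hq : PNCoeff q) : PNCoeff (p * q) := by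
  intro n; rw [Polynomial.coeff_mul]
  exact Finset.sum_nonneg fun z _ => mul_nonneg (hp _) (hq _)
lemma PNCoeff.pow {p : Polynomial ℝ} (hp : PNCoeff p) (n : ℕ) : PNCoeff (p ^ n) := by
  induction n with
  | zero => simpa using PNCoeff.one
  | succ m ih => rw [pow_succ]; exact ih.mul hp
lemma PNCoeff.sum {α : Type*} (s : Finset α) (f : α → Polynomial ℝ)
    (h : ∀ a ∈ s, PNCoeff (f a)) : PNCoeff (∑ a ∈ s, f a) :=
  Finset.sum_induction f PNCoeff (fun _ _ => PNCoeff.add) PNCoeff.zero h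
lemma PNCoeff.prod {α : Type*} (s : Finset α) (f : α → Polynomial ℝ)
    (h : ∀ a ∈ s, PNCoeff (f a)) : PNCoeff (∏ a ∈ s, f a) :=
  Finset.prod_induction f PNCoeff (fun _ _ => PNCoeff.mul) PNCoeff.one h
lemma PNCoeff.C {r : ℝ} (hr : 0 ≤ r) : PNCoeff (Polynomial.C r) := by
  intro n; rw [Polynomial.coeff_C]; split <;> simp [hr]
lemma PNCoeff.X : PNCoeff (Polynomial.X : Polynomial ℝ) := by
  intro n; rw [Polynomial.coeff_X]; split <;> norm_num

lemma aeval_shift_nn {e : ℕ} (x : Fin e → ℝ) (hx : ∀ k, 0 ≤ x k)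
    {p : MvPolynomial (Fin e) ℝ} (hp : NNCoeff p) :
    PNCoeff (MvPolynomial.aeval (fun k => Polynomial.C (x k) + Polynomial.X) p) := by
  rw [p.as_sum, map_sum]
  apply PNCoeff.sum
  intro d _
  rw [aeval_monomial]
  apply PNCoeff.mul
  · have : (algebraMap ℝ (Polynomial ℝ)) (MvPolynomial.coeff d p)
        = Polynomial.C (MvPolynomial.coeff d p) := rfl
    rw [this]
    exact PNCoeff.C (hp d)
  · rw [Finsupp.prod]
    exact PNCoeff.prod _ _ fun k _ => ((PNCoeff.C (hx k)).add PNCoeff.X).pow _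

/-- for a partition `λ`, an integer `e ≥ 1`, `0 ≤ i ≤ |λ|`, and
nonnegative reals `x₁, …, x_e`, one has `s_λ^{(i)}(x₁, …, x_e) ≥ 0`. -/
theorem derivedSchur_eval_nonneg (e N : ℕ) (he : 1 ≤ e) (lam : Fin N → ℕ)
    (hanti : Antitone lam) (i : ℕ) (hi : i ≤ ∑ j, lam j)
    (x : Fin e → ℝ) (hx : ∀ j, 0 ≤ x j) :
    0 ≤ MvPolynomial.eval x (derivedSchur e N lam i) := by
  have hg : StrictMono (fun k : Fin N => (k : ℤ) - (lam k : ℤ)) := by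
    intro a b hab
    have h1 : lam b ≤ lam a := hanti hab.le
    have h2 : (a : ℕ) < (b : ℕ) := hab
    simp only
    omega
  have hh : StrictMono (fun j : Fin N => (j : ℤ)) := by
    intro a b hab
    have : (a : ℕ) < (b : ℕ) := hab
    simp only []
    exact_mod_cast this
  have hs : NNCoeff (schur e N lam) := by
    unfold schur
    have hm : (Matrix.of fun i j : Fin N => esymmZ e ((lam i : ℤ) - (i : ℤ) + (j : ℤ)))
        = (Matrix.of fun k j : Fin N =>
            esymmZ e ((fun j : Fin N => (j : ℤ)) j - ((fun k : Fin N => (k : ℤ) - lam k) k))) := by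
      funext a b
      simp only [Matrix.of_apply]
      congr 1
      ring
    rw [hm]
    exact toeplitz_nn e N _ _ hg hh
  have key : Polynomial.map (MvPolynomial.eval x) (schurShift e N lam)
      = MvPolynomial.aeval (fun k => Polynomial.C (x k) + Polynomial.X) (schur e N lam) := by
    unfold schurShift
    induction (schur e N lam) using MvPolynomial.induction_on with
    | C a => simp
    | add p q hp hq => simp [hp, hq]
    | mul_X p k hp => simp [hp]
  have hev : MvPolynomial.eval x (derivedSchur e N lam i)
      = (Polynomial.map (MvPolynomial.eval x) (schurShift e N lam)).coeff i := by
    rw [Polynomial.coeff_map]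
    rfl
  rw [hev, key]
  exact aeval_shift_nn x hx hs i
end

section
/- Let p(x₁, …, x_e) = Σ_μ a_μ x^μ be a homogeneous real polynomial of degree d ≥ 2, let e' be an integer with e' ≥ max_{1≤j≤e} deg_{x_j}(p), and set q(x₁, …, x_e) := x₁^{e'} ⋯ x_e^{e'} · p(x₁^{−1}, …, x_e^{−1}) = Σ_μ a_μ x^{e'·𝟙 − μ}, a polynomial. Let α ∈ ℤ_{≥0}^e with Σ_j α_j = d − 2 and set β_j := e' − α_j. Then ∂^α N(p)/∂x^α = (1/2) Σ_{1≤i,j≤e} [q·x_i·x_j]_β · x_i x_j, where [r]_β denotes the coefficient of x^β in the polynomial r (taken to be 0 if some β_j < 0) and N(p) := Σ_μ (a_μ/μ!) x^μ is the normalization of p. -/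
open MvPolynomial Finset

/-- The iterated partial derivative `∂^α = ∏ⱼ (∂/∂xⱼ)^{αⱼ}` on `ℝ[x₁,…,x_e]`
(the partial derivatives commute, so the order of composition is immaterial). -/
noncomputable def pderivMulti {e : ℕ} (α : Fin e → ℕ) :
    MvPolynomial (Fin e) ℝ →ₗ[ℝ] MvPolynomial (Fin e) ℝ :=
  (List.ofFn fun j : Fin e =>
    ((MvPolynomial.pderiv j).toLinearMap ^ (α j) :
      Module.End ℝ (MvPolynomial (Fin e) ℝ))).prod

/-- The normalization `N(p) := Σ_μ (a_μ / μ!) x^μ` of `p = Σ_μ a_μ x^μ`, where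
`μ! = μ₁! ⋯ μ_e!`. -/
noncomputable def normalization {e : ℕ} (p : MvPolynomial (Fin e) ℝ) :
    MvPolynomial (Fin e) ℝ :=
  ∑ μ ∈ p.support,
    MvPolynomial.monomial μ
      (MvPolynomial.coeff μ p / ∏ j, ((μ j).factorial : ℝ))

/-- `q(x₁,…,x_e) := x₁^{e'} ⋯ x_e^{e'} p(x₁⁻¹,…,x_e⁻¹) = Σ_μ a_μ x^{e'·𝟙 − μ}`,
for `p = Σ_μ a_μ x^μ` with `deg_{x_j} p ≤ e'` for all `j`. -/
noncomputable def reciprocalPoly {e : ℕ} (e' : ℕ) (p : MvPolynomial (Fin e) ℝ) :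
    MvPolynomial (Fin e) ℝ :=
  ∑ μ ∈ p.support,
    MvPolynomial.monomial (Finsupp.equivFunOnFinite.symm fun j => e' - μ j)
      (MvPolynomial.coeff μ p)

/-- `[r]_β`, the coefficient of `x^β` in `r`, for a multi-index `β ∈ ℤ^e`, taken to be
`0` if some `β_j < 0`. -/
noncomputable def coeffZ {e : ℕ} (β : Fin e → ℤ) (r : MvPolynomial (Fin e) ℝ) : ℝ :=
  if ∀ j, 0 ≤ β j then
    MvPolynomial.coeff (Finsupp.equivFunOnFinite.symm fun j => (β j).toNat) r
  else 0

theorem pow_pderiv_monomial {e : ℕ} (j : Fin e) (n : ℕ) (μ : Fin e →₀ ℕ) (c : ℝ) :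
    (((pderiv j).toLinearMap ^ n : Module.End ℝ (MvPolynomial (Fin e) ℝ))) (monomial μ c)
      = monomial (μ - Finsupp.single j n) (c * ((μ j).descFactorial n)) := by
  induction n generalizing μ c with
  | zero => simp
  | succ n ih =>
      rw [pow_succ, Module.End.mul_apply]
      have h1 : ((pderiv j).toLinearMap : MvPolynomial (Fin e) ℝ →ₗ[ℝ] _) (monomial μ c)
          = monomial (μ - Finsupp.single j 1) (c * (μ j)) := by
        simp [pderiv_monomial]
      rw [h1, ih]
      have h2 : μ - Finsupp.single j 1 - Finsupp.single j n = μ - Finsupp.single j (n+1) := by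
        rw [tsub_tsub, ← Finsupp.single_add, Nat.add_comm]
      have h3 : (μ - Finsupp.single j 1 : Fin e →₀ ℕ) j = μ j - 1 := by
        rw [Finsupp.tsub_apply, Finsupp.single_eq_same]
      have h4 : (μ j) * ((μ j - 1).descFactorial n) = (μ j).descFactorial (n+1) := by
        cases hm : μ j with
        | zero => simp
        | succ m => simpa using (Nat.succ_descFactorial_succ m n).symm
      rw [h2, h3, ← h4]
      push_cast
      ring_nf

theorem list_aux {e : ℕ} (α : Fin e → ℕ) (μ : Fin e →₀ ℕ) (c : ℝ) :
    ∀ L : List (Fin e), L.Nodup →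
    ((L.map fun j => ((pderiv j).toLinearMap ^ (α j) :
        Module.End ℝ (MvPolynomial (Fin e) ℝ))).prod) (monomial μ c)
      = monomial (μ - (L.map fun j => Finsupp.single j (α j)).sum)
          (c * ((L.map fun j => (((μ j).descFactorial (α j) : ℝ)))).prod) := by
  intro L
  induction L with
  | nil => simp
  | cons j₀ L ih =>
    intro hnd
    rw [List.map_cons, List.prod_cons, Module.End.mul_apply, ih hnd.of_cons,
      pow_pderiv_monomial]
    have hj0 : ((L.map fun j => Finsupp.single j (α j)).sum : Fin e →₀ ℕ) j₀ = 0 := by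
      have := map_list_sum (Finsupp.applyAddHom (M := ℕ) j₀)
        (L.map fun j => Finsupp.single j (α j))
      rw [List.map_map] at this
      rw [show ((L.map fun j => Finsupp.single j (α j)).sum : Fin e →₀ ℕ) j₀
        = (Finsupp.applyAddHom (M := ℕ) j₀) (L.map fun j => Finsupp.single j (α j)).sum from rfl,
        this]
      apply List.sum_eq_zero
      intro x hx
      simp only [List.mem_map] at hx
      obtain ⟨j, hjL, rfl⟩ := hx
      have : j ≠ j₀ := fun h => ((List.nodup_cons.mp hnd).1 (h ▸ hjL))
      simp [Finsupp.applyAddHom, Finsupp.single_apply, this]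
    have hco : ((μ - (L.map fun j => Finsupp.single j (α j)).sum : Fin e →₀ ℕ)) j₀ = μ j₀ := by
      rw [Finsupp.tsub_apply, hj0, Nat.sub_zero]
    rw [hco, List.map_cons, List.sum_cons, List.map_cons, List.prod_cons]
    congr 1
    · rw [tsub_tsub, add_comm]
    · ring

theorem sum_single_eq {e : ℕ} (α : Fin e → ℕ) :
    ((List.finRange e).map fun j => Finsupp.single j (α j)).sum
      = Finsupp.equivFunOnFinite.symm α := by
  ext k
  rw [show (((List.finRange e).map fun j => Finsupp.single j (α j)).sum : Fin e →₀ ℕ) k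
    = (Finsupp.applyAddHom (M := ℕ) k) ((List.finRange e).map fun j => Finsupp.single j (α j)).sum from rfl,
    map_list_sum]
  rw [List.map_map, ← List.ofFn_eq_map, List.sum_ofFn]
  simp [Finsupp.single_apply]

theorem pderivMulti_monomial {e : ℕ} (α : Fin e → ℕ) (μ : Fin e →₀ ℕ) (c : ℝ) :
    pderivMulti α (monomial μ c)
      = monomial (μ - Finsupp.equivFunOnFinite.symm α)
          (c * ∏ j, (((μ j).descFactorial (α j) : ℝ))) := by
  have h := list_aux α μ c (List.finRange e) (List.nodup_finRange e)
  rw [pderivMulti, List.ofFn_eq_map, h, sum_single_eq, ← List.ofFn_eq_map, List.prod_ofFn]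

theorem coeff_pderivMulti_normalization {e : ℕ} (p : MvPolynomial (Fin e) ℝ)
    (α : Fin e → ℕ) (ν : Fin e →₀ ℕ) :
    coeff ν (pderivMulti α (normalization p))
      = coeff (ν + Finsupp.equivFunOnFinite.symm α) p / ∏ j, ((ν j).factorial : ℝ) := by
  set A := Finsupp.equivFunOnFinite.symm α with hA
  have hAk : ∀ k, A k = α k := fun k => rfl
  rw [normalization, map_sum]
  simp_rw [pderivMulti_monomial, ← hA]
  rw [coeff_sum]
  simp_rw [coeff_monomial]
  rw [Finset.sum_eq_single (ν + A)]
  · rw [if_pos (add_tsub_cancel_right ν A)]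
    by_cases hmem : ν + A ∈ p.support
    · -- value computation
      have hcoord : ∀ k, (ν + A : Fin e →₀ ℕ) k = ν k + α k := by
        intro k; rw [Finsupp.add_apply, hAk]
      have key : (∏ j, (((ν + A : Fin e →₀ ℕ) j).factorial : ℝ))
          = (∏ j, ((ν j).factorial : ℝ)) * ∏ j, ((((ν + A : Fin e →₀ ℕ) j).descFactorial (α j) : ℝ)) := by
        rw [← Finset.prod_mul_distrib]
        apply Finset.prod_congr rfl
        intro k _
        rw [hcoord k]
        rw [← Nat.cast_mul, ← Nat.factorial_mul_descFactorial (Nat.le_add_left (α k) (ν k))]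
        norm_num
      rw [key]
      have h1 : ∀ j, (0:ℝ) < ((ν j).factorial : ℝ) := fun j => by positivity
      have h2 : (0:ℝ) < ∏ j, ((ν j).factorial : ℝ) := Finset.prod_pos fun j _ => h1 j
      have h3 : (0:ℝ) < ∏ j, ((((ν + A : Fin e →₀ ℕ) j).descFactorial (α j) : ℝ)) := by
        apply Finset.prod_pos
        intro j _
        have hle : α j ≤ (ν + A : Fin e →₀ ℕ) j := by rw [hcoord]; omega
        have hne0 : (((ν + A : Fin e →₀ ℕ) j).descFactorial (α j)) ≠ 0 := by
          rw [Ne, Nat.descFactorial_eq_zero_iff_lt]; omega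
        exact_mod_cast Nat.pos_of_ne_zero hne0
      rw [div_mul_eq_mul_div, mul_comm (∏ j, ((ν j).factorial : ℝ)), ← div_div,
        mul_div_assoc, div_self h3.ne', mul_one]
    · simp [MvPolynomial.notMem_support_iff.mp hmem]
  · intro μ hμ hne
    by_cases hle : μ - A = ν
    · rw [if_pos hle]
      have hnotle : ¬ A ≤ μ := by
        intro h
        exact hne (by rw [← hle, tsub_add_cancel_of_le h])
      rw [Finsupp.le_def] at hnotle
      push_neg at hnotle
      obtain ⟨k, hk⟩ := hnotle
      have : ((μ k).descFactorial (α k) : ℝ) = 0 := by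
        rw [Nat.descFactorial_eq_zero_iff_lt.mpr (by rw [hAk] at hk; omega)]
        norm_num
      rw [Finset.prod_eq_zero (f := fun j => (((μ j).descFactorial (α j) : ℕ) : ℝ)) (Finset.mem_univ k) this, mul_zero]
    · rw [if_neg hle]
  · intro h
    simp [MvPolynomial.notMem_support_iff.mp h]

theorem coeff_reciprocalPoly {e e' : ℕ} (p : MvPolynomial (Fin e) ℝ)
    (he' : ∀ j, p.degreeOf j ≤ e') (ν : Fin e →₀ ℕ) (hν : ∀ k, ν k ≤ e') :
    coeff ν (reciprocalPoly e' p)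
      = coeff (Finsupp.equivFunOnFinite.symm fun k => e' - ν k) p := by
  rw [reciprocalPoly, coeff_sum]
  simp_rw [coeff_monomial]
  rw [Finset.sum_eq_single (Finsupp.equivFunOnFinite.symm fun k => e' - ν k)]
  · rw [if_pos]
    ext k
    have := hν k
    show e' - (e' - ν k) = ν k
    omega
  · intro μ hμ hne
    rw [if_neg]
    intro h
    apply hne
    ext k
    have h1 : μ k ≤ e' := le_trans (MvPolynomial.monomial_le_degreeOf k hμ) (he' k)
    have h2 := DFunLike.congr_fun h k
    have h3 : (Finsupp.equivFunOnFinite.symm fun j => e' - μ j : Fin e →₀ ℕ) k = e' - μ k := rfl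
    rw [h3] at h2
    show μ k = e' - ν k
    omega
  · intro h
    simp [MvPolynomial.notMem_support_iff.mp h]

theorem coeffZ_eq {e e' : ℕ} (p : MvPolynomial (Fin e) ℝ)
    (he' : ∀ j : Fin e, p.degreeOf j ≤ e') (α : Fin e → ℕ) (i j : Fin e) :
    coeffZ (fun k => (e' : ℤ) - (α k : ℤ))
        (reciprocalPoly e' p * MvPolynomial.X i * MvPolynomial.X j)
      = coeff (Finsupp.equivFunOnFinite.symm α + Finsupp.single i 1 + Finsupp.single j 1) p := by
  classical
  set m : Fin e →₀ ℕ :=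
    Finsupp.equivFunOnFinite.symm α + Finsupp.single i 1 + Finsupp.single j 1 with hmdef
  have hm : ∀ k, m k = α k + (if i = k then 1 else 0) + (if j = k then 1 else 0) := by
    intro k
    rw [hmdef, Finsupp.add_apply, Finsupp.add_apply, Finsupp.single_apply, Finsupp.single_apply]
    rfl
  have hzero : ∀ k, e' < m k → coeff m p = 0 := by
    intro k hk
    by_contra hcon
    have h1 := MvPolynomial.monomial_le_degreeOf k (MvPolynomial.mem_support_iff.mpr hcon)
    have h2 := he' k
    omega
  by_cases hc : ∀ k, (0:ℤ) ≤ (e':ℤ) - α k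
  · rw [coeffZ, if_pos hc]
    have hαe : ∀ k, α k ≤ e' := by intro k; have := hc k; omega
    set B : Fin e →₀ ℕ := Finsupp.equivFunOnFinite.symm fun k => e' - α k with hB
    have hBco : ∀ k, B k = e' - α k := fun k => rfl
    have htoNat : (Finsupp.equivFunOnFinite.symm fun k => ((e':ℤ) - (α k : ℤ)).toNat) = B := by
      ext k
      show ((e':ℤ) - α k).toNat = e' - α k
      omega
    rw [htoNat, MvPolynomial.coeff_mul_X']
    by_cases hBj : j ∈ B.support
    · rw [if_pos hBj, MvPolynomial.coeff_mul_X']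
      by_cases hBi : i ∈ (B - Finsupp.single j 1).support
      · rw [if_pos hBi]
        have h2 := Finsupp.mem_support_iff.mp hBi
        rw [Finsupp.tsub_apply, hBco i, Finsupp.single_apply] at h2
        have h1 := Finsupp.mem_support_iff.mp hBj
        rw [hBco j] at h1
        set ν : Fin e →₀ ℕ := B - Finsupp.single j 1 - Finsupp.single i 1 with hν
        have hνco : ∀ k, ν k = e' - α k - (if j = k then 1 else 0) - (if i = k then 1 else 0) := by
          intro k
          rw [hν, Finsupp.tsub_apply, Finsupp.tsub_apply, hBco k, Finsupp.single_apply,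
            Finsupp.single_apply]
        rw [coeff_reciprocalPoly p he' ν (fun k => by rw [hνco k]; split_ifs <;> omega)]
        congr 1
        ext k
        show e' - ν k = m k
        rw [hνco k, hm k]
        have he1 := hαe k
        rcases eq_or_ne i k with hik | hik <;> rcases eq_or_ne j k with hjk | hjk
        · subst hik; subst hjk
          simp only [eq_self_iff_true, if_true, if_pos rfl] at h2 ⊢
          omega
        · subst hik
          simp only [if_neg hjk, if_pos rfl, if_true, eq_self_iff_true] at h2 ⊢
          omega
        · subst hjk
          simp only [if_neg hik, if_neg (Ne.symm hik), if_pos rfl, if_true,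
            eq_self_iff_true] at h2 ⊢
          omega
        · simp only [if_neg hik, if_neg hjk]
          omega
      · rw [if_neg hBi]
        have hBi0 := Finsupp.notMem_support_iff.mp hBi
        rw [Finsupp.tsub_apply, hBco i, Finsupp.single_apply] at hBi0
        refine (hzero i ?_).symm
        rw [hm i, if_pos rfl]
        have h4 := hαe i
        by_cases hji : j = i
        · rw [if_pos hji] at hBi0
          rw [if_pos hji]
          omega
        · rw [if_neg hji] at hBi0
          rw [if_neg hji]
          omega
    · rw [if_neg hBj]
      have hBj0 := Finsupp.notMem_support_iff.mp hBj
      rw [hBco j] at hBj0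
      refine (hzero j ?_).symm
      rw [hm j, if_pos rfl]
      have := hαe j
      split_ifs <;> omega
  · rw [coeffZ, if_neg hc]
    push_neg at hc
    obtain ⟨k, hk⟩ := hc
    refine (hzero k ?_).symm
    rw [hm k]
    have : e' < α k := by omega
    split_ifs <;> omega

theorem finsupp_sum_eq_two {e : ℕ} (ν : Fin e →₀ ℕ) (h : ∑ k, ν k = 2) :
    ∃ i j, ν = Finsupp.single i 1 + Finsupp.single j 1 := by
  classical
  have sum_single : ∀ i : Fin e, ∑ k, (Finsupp.single i 1 : Fin e →₀ ℕ) k = 1 := by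
    intro i
    simp [Finsupp.single_apply]
  have h0 : ∃ i, ν i ≠ 0 := by
    by_contra hcon
    push_neg at hcon
    rw [Finset.sum_eq_zero (fun k _ => hcon k)] at h
    omega
  obtain ⟨i, hi⟩ := h0
  have hle : Finsupp.single i 1 ≤ ν := Finsupp.single_le_iff.mpr (by omega)
  set ν' := ν - Finsupp.single i 1 with hν'
  have hadd : ν' + Finsupp.single i 1 = ν := tsub_add_cancel_of_le hle
  have hsum' : ∑ k, ν' k = 1 := by
    have : ∑ k, (ν' + Finsupp.single i 1 : Fin e →₀ ℕ) k = 2 := by rw [hadd]; exact h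
    simp only [Finsupp.add_apply, Finset.sum_add_distrib, sum_single i] at this
    omega
  have h0' : ∃ j, ν' j ≠ 0 := by
    by_contra hcon
    push_neg at hcon
    rw [Finset.sum_eq_zero (fun k _ => hcon k)] at hsum'
    omega
  obtain ⟨j, hj⟩ := h0'
  have hle' : Finsupp.single j 1 ≤ ν' := Finsupp.single_le_iff.mpr (by omega)
  have hadd' : ν' - Finsupp.single j 1 + Finsupp.single j 1 = ν' := tsub_add_cancel_of_le hle'
  have hz : ν' - Finsupp.single j 1 = 0 := by
    ext k
    have : ∑ k, (ν' - Finsupp.single j 1 + Finsupp.single j 1 : Fin e →₀ ℕ) k = 1 := by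
      rw [hadd']; exact hsum'
    simp only [Finsupp.add_apply, Finset.sum_add_distrib, sum_single j] at this
    have hz' : ∑ k, (ν' - Finsupp.single j 1 : Fin e →₀ ℕ) k = 0 := by omega
    rw [Finset.sum_eq_zero_iff] at hz'
    exact hz' k (Finset.mem_univ k)
  refine ⟨j, i, ?_⟩
  rw [← hadd, ← hadd', hz, zero_add]

theorem single_add_single_eq {e : ℕ} (i j i' j' : Fin e) :
    Finsupp.single i' 1 + Finsupp.single j' 1 = Finsupp.single i 1 + Finsupp.single j 1
      ↔ (i' = i ∧ j' = j) ∨ (i' = j ∧ j' = i) := by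
  classical
  constructor
  · intro H
    have H2 := congrArg Finsupp.toMultiset H
    rw [map_add, map_add] at H2
    simp only [Finsupp.toMultiset_single, one_smul] at H2
    rw [Multiset.singleton_add, Multiset.singleton_add, Multiset.cons_eq_cons] at H2
    rcases H2 with ⟨h1, h2⟩ | ⟨h1, cs, h2, h3⟩
    · exact Or.inl ⟨h1, Multiset.singleton_inj.mp h2⟩
    · obtain ⟨hji, hcs⟩ := (Multiset.singleton_eq_cons_iff _).mp h2
      subst hcs
      have h4 : j = i' := by
        have := (Multiset.singleton_eq_cons_iff _).mp h3
        exact this.1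
      exact Or.inr ⟨h4.symm, hji⟩
  · rintro (⟨rfl, rfl⟩ | ⟨rfl, rfl⟩)
    · rfl
    · rw [add_comm]


/-- let `p` be homogeneous of degree `d ≥ 2` in `x₁,…,x_e`, let
`e' ≥ max_j deg_{x_j}(p)`, and let `q := x₁^{e'} ⋯ x_e^{e'} p(x₁⁻¹,…,x_e⁻¹)`.  For
`α ∈ ℤ_{≥0}^e` with `Σ_j α_j = d − 2` and `β_j := e' − α_j`, one has
`∂^α N(p)/∂x^α = (1/2) Σ_{i,j} [q xᵢ xⱼ]_β xᵢ xⱼ`. -/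
theorem pderivMulti_normalization_eq (e e' d : ℕ) (hd : 2 ≤ d)
    (p : MvPolynomial (Fin e) ℝ) (hp : p.IsHomogeneous d)
    (he' : ∀ j : Fin e, p.degreeOf j ≤ e')
    (α : Fin e → ℕ) (hα : ∑ j, α j = d - 2) :
    pderivMulti α (normalization p) =
      (1 / 2 : ℝ) •
        ∑ i : Fin e, ∑ j : Fin e,
          coeffZ (fun k => (e' : ℤ) - (α k : ℤ))
              (reciprocalPoly e' p * MvPolynomial.X i * MvPolynomial.X j) •
            (MvPolynomial.X i * MvPolynomial.X j) := by
    classical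
  set A : Fin e →₀ ℕ := Finsupp.equivFunOnFinite.symm α with hA
  have hAk : ∀ k, A k = α k := fun k => rfl
  have hdeg : ∀ m : Fin e →₀ ℕ, m.degree = ∑ k, m k := by
    intro m
    rw [Finsupp.degree]
    exact Finset.sum_subset (Finset.subset_univ _)
      (fun k _ hk => Finsupp.notMem_support_iff.mp hk)
  have hAsum : ∑ k, A k = d - 2 := by rw [← hα]; exact Finset.sum_congr rfl fun k _ => hAk k
  have hXX : ∀ i j : Fin e, (X i * X j : MvPolynomial (Fin e) ℝ)
      = monomial (Finsupp.single i 1 + Finsupp.single j 1) 1 := by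
    intro i j
    calc (X i * X j : MvPolynomial (Fin e) ℝ)
        = monomial (Finsupp.single i 1) 1 * monomial (Finsupp.single j 1) 1 := rfl
      _ = monomial (Finsupp.single i 1 + Finsupp.single j 1) (1 * 1) := monomial_mul
      _ = monomial (Finsupp.single i 1 + Finsupp.single j 1) 1 := by rw [one_mul]
  have hsum_single : ∀ i : Fin e, ∑ k, (Finsupp.single i 1 : Fin e →₀ ℕ) k = 1 := by
    intro i
    simp [Finsupp.single_apply]
  apply MvPolynomial.ext
  intro ν
  rw [coeff_pderivMulti_normalization, ← hA, coeff_smul, coeff_sum]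
  simp_rw [coeff_sum, coeff_smul, coeffZ_eq p he' α, ← hA, hXX, coeff_monomial]
  by_cases h2 : ∑ k, ν k = 2
  · obtain ⟨i0, j0, rfl⟩ := finsupp_sum_eq_two ν h2
    set ν : Fin e →₀ ℕ := Finsupp.single i0 1 + Finsupp.single j0 1 with hν
    set c : ℝ := coeff (A + Finsupp.single i0 1 + Finsupp.single j0 1) p with hc
    have hνA : coeff (ν + A) p = c := by
      rw [hc, hν]
      congr 1
      rw [add_comm, add_assoc]
    have hterm : ∀ i j : Fin e,
        coeff (A + Finsupp.single i 1 + Finsupp.single j 1) p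
            • (if Finsupp.single i 1 + Finsupp.single j 1 = ν then (1:ℝ) else 0)
          = if (i = i0 ∧ j = j0) ∨ (i = j0 ∧ j = i0) then c else 0 := by
      intro i j
      by_cases hcnd : Finsupp.single i 1 + Finsupp.single j 1 = ν
      · rw [if_pos hcnd, if_pos ((single_add_single_eq i0 j0 i j).mp hcnd), smul_eq_mul, mul_one,
          hc]
        congr 1
        rw [add_assoc, add_assoc, hcnd, hν]
      · rw [if_neg hcnd, smul_zero,
          if_neg (fun h => hcnd ((single_add_single_eq i0 j0 i j).mpr h))]
    simp_rw [hterm]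
    rw [hνA]
    have hone : ∀ a b : Fin e, (∑ i : Fin e, ∑ j : Fin e,
        if i = a ∧ j = b then c else 0) = c := by
      intro a b
      simp_rw [ite_and]
      rw [Finset.sum_eq_single a]
      · simp only [eq_self_iff_true, if_true]
        rw [Finset.sum_ite_eq' Finset.univ b fun _ => c]
        simp
      · intro b' _ hb'
        simp only [if_neg hb', Finset.sum_const_zero]
      · intro h; exact absurd (Finset.mem_univ a) h
    by_cases hij : i0 = j0
    · subst hij
      have hfact : ∏ k, ((ν k).factorial : ℝ) = 2 := by
        have : ν = Finsupp.single i0 2 := by rw [hν, ← Finsupp.single_add]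
        rw [this]
        rw [show (2:ℝ) = ∏ k, (if i0 = k then (2:ℝ) else 1) by rw [Finset.prod_ite_eq]; simp]
        apply Finset.prod_congr rfl
        intro k _
        rw [Finsupp.single_apply]
        by_cases h : i0 = k <;> simp [h]
      rw [hfact]
      have hsum : (∑ i : Fin e, ∑ j : Fin e,
          if (i = i0 ∧ j = i0) ∨ (i = i0 ∧ j = i0) then c else 0) = c := by
        simp_rw [or_self]
        exact hone i0 i0
      rw [hsum, smul_eq_mul]
      ring
    · have hfact : ∏ k, ((ν k).factorial : ℝ) = 1 := by
        apply Finset.prod_eq_one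
        intro k _
        have hco : ν k = (if i0 = k then 1 else 0) + (if j0 = k then 1 else 0) := by
          rw [hν, Finsupp.add_apply, Finsupp.single_apply, Finsupp.single_apply]
        by_cases h1 : i0 = k <;> by_cases h2' : j0 = k
        · exact absurd (h1.trans h2'.symm) hij
        · rw [hco, if_pos h1, if_neg h2']
          norm_num
        · rw [hco, if_neg h1, if_pos h2']
          norm_num
        · rw [hco, if_neg h1, if_neg h2']
          norm_num
      rw [hfact]
      have hsplit : ∀ i j : Fin e,
          (if (i = i0 ∧ j = j0) ∨ (i = j0 ∧ j = i0) then c else 0)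
            = (if i = i0 ∧ j = j0 then c else 0) + (if i = j0 ∧ j = i0 then c else 0) := by
        intro i j
        by_cases ha : i = i0 ∧ j = j0 <;> by_cases hb : i = j0 ∧ j = i0
        · exact absurd (ha.1.symm.trans hb.1) hij
        · rw [if_pos (Or.inl ha), if_pos ha, if_neg hb, add_zero]
        · rw [if_pos (Or.inr hb), if_neg ha, if_pos hb, zero_add]
        · rw [if_neg (by tauto), if_neg ha, if_neg hb, add_zero]
      simp_rw [hsplit, Finset.sum_add_distrib]
      rw [hone, hone, smul_eq_mul]
      ring
  · have hz : coeff (ν + A) p = 0 := by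
      apply hp.coeff_eq_zero
      rw [hdeg]
      have hsplit : ∑ k, (ν + A : Fin e →₀ ℕ) k = (∑ k, ν k) + ∑ k, A k := by
        simp [Finsupp.add_apply, Finset.sum_add_distrib]
      rw [hsplit, hAsum]
      omega
    rw [hz, zero_div]
    symm
    rw [smul_eq_zero]
    right
    apply Finset.sum_eq_zero
    intro i _
    apply Finset.sum_eq_zero
    intro j _
    rw [if_neg, smul_zero]
    intro hcnd
    apply h2
    rw [← hcnd]
    simp [Finsupp.add_apply, Finset.sum_add_distrib, hsum_single]
end
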